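/- Graph-counting lemma: let G be a finite directed multigraph with two edge types (x-edges and ∂-edges, possibly loops), obtained by gluing n cycles C(1),…,C(n) at vertices, and suppose G is ∂-regular (for each ordered pair of distinct vertices (a,b) and each ∂-edge from a to b, in the linear order on edges there are strictly more x-edges from a to b than ∂-edges from a to b among earlier edges). Then the number of vertices of G is at most the number of non-degenerate (non-loop) x-edges of G. -/

import Mathlib

/-- A letter of the alphabet `{x_{ij}, ∂_{ij}}`: `(true, i, j)` encodes `x_{ij}` and
`(false, i, j)` encodes `∂_{ij}`. A word (monomial) is a list of letters, written
left to right; "to the right of a factor" means later in the list. -/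
abbrev MonLetter := Bool × ℕ × ℕ

/-- The cyclic monomial `x_{α₁i₁}⋯x_{α_k i_k} ∂_{α₁i₂}⋯∂_{α_k i₁}` determined by the
index tuples `α, i : Fin k → ℕ` (the `∂`-indices are cyclically shifted). -/
def cycleWord (k : ℕ) (α i : Fin k → ℕ) : List MonLetter :=
  (List.ofFn fun t => ((true, α t, i t) : MonLetter)) ++
    (List.ofFn fun t : Fin k => ((false, α t, i (finRotate k t)) : MonLetter))

/-- `deg`: the number of `x`-factors of a monomial. -/
def degW (w : List MonLetter) : ℕ := (w.filter fun a => a.1).length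

/-- `cap` (capacity): the number of diagonal `∂`-factors `∂_{ii}` of a monomial. -/
def capW (w : List MonLetter) : ℕ :=
  (w.filter fun a => !a.1 && (a.2.1 == a.2.2)).length

/-- `cov` (coverage): the number of distinct indices appearing in a monomial. -/
def covW (w : List MonLetter) : ℕ :=
  ((w.map fun a => a.2.1) ++ (w.map fun a => a.2.2)).toFinset.card

/-- `∂`-regularity: for every factor `∂_{ij}` with `i ≠ j`, strictly more letters
`x_{ij}` than `∂_{ij}` occur to the right of it. -/
def DRegular (w : List MonLetter) : Prop :=
  ∀ p : Fin w.length, (w.get p).1 = false → (w.get p).2.1 ≠ (w.get p).2.2 →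
    (w.drop (p + 1)).count (false, (w.get p).2.1, (w.get p).2.2) <
      (w.drop (p + 1)).count (true, (w.get p).2.1, (w.get p).2.2)

/-- `x`-regularity: for every factor `x_{ij}` with `i ≠ j`, strictly more letters
`∂_{ij}` than `x_{ij}` occur to the left of it. -/
def XRegular (w : List MonLetter) : Prop :=
  ∀ p : Fin w.length, (w.get p).1 = true → (w.get p).2.1 ≠ (w.get p).2.2 →
    (w.take p).count (true, (w.get p).2.1, (w.get p).2.2) <
      (w.take p).count (false, (w.get p).2.1, (w.get p).2.2)


/-- The number of non-degenerate (non-loop) `x`-edges of the graph of a word. -/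
def exW (w : List MonLetter) : ℕ :=
  (w.filter fun a => a.1 && !(a.2.1 == a.2.2)).length

/-!
Induct on the cycles from the left: it suffices that the vertices a cycle `C` adds to the graph
`G'` of the later cycles are at most as many as its non-loop `x`-edges. Since all `∂`-edges of
`C` follow its `x`-edges, `∂`-regularity gives every non-loop `∂`-edge of `C` a parallel
`x`-edge in `G'`, so both its ends are old vertices. Walking around `C`, a new vertex `a` is
therefore left only along `x`-edges; as `C` has a second vertex, it is left at some point, along
an `x`-edge `x_{α_t a}` with `α_t ≠ a`. Sending each such `t` to `a` covers the new vertices.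
-/

open Finset

theorem forall_of_finRotate_closed {n : ℕ} {P : Fin n → Prop}
    (h : ∀ t, P t → P (finRotate n t)) {t₀ : Fin n} (h₀ : P t₀) (t : Fin n) : P t := by
  have := t.neZero
  have key : (finRotate n)^[(t - t₀ : Fin n).1] t₀ = t := by
    rw [← finCycle_eq_finRotate_iterate, finCycle_apply, add_sub_cancel]
  exact key ▸ Function.Iterate.rec P h₀ h _

def vertices (w : List MonLetter) : Finset ℕ :=
  ((w.map fun a => a.2.1) ++ (w.map fun a => a.2.2)).toFinset

theorem covW_eq_card_vertices (w : List MonLetter) : covW w = #(vertices w) := rfl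

theorem vertices_append (u v : List MonLetter) :
    vertices (u ++ v) = vertices u ∪ vertices v := by
  ext a
  simp only [vertices, List.map_append, List.mem_toFinset, List.mem_append, mem_union]
  tauto

theorem mem_vertices_of_mem {w : List MonLetter} {e : MonLetter} (he : e ∈ w) :
    e.2.1 ∈ vertices w ∧ e.2.2 ∈ vertices w := by
  simp only [vertices, List.mem_toFinset, List.mem_append, List.mem_map]
  exact ⟨.inl ⟨e, he, rfl⟩, .inr ⟨e, he, rfl⟩⟩

theorem vertices_cycleWord (k : ℕ) (α i : Fin k → ℕ) :
    vertices (cycleWord k α i) = univ.image α ∪ univ.image i := by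
  ext a
  simp only [vertices, cycleWord, List.map_append, List.map_ofFn, List.mem_toFinset,
    List.mem_append, List.mem_ofFn, Function.comp_def, mem_union, mem_image, mem_univ, true_and]
  constructor
  · rintro ((⟨t, ht⟩ | ⟨t, ht⟩) | (⟨t, ht⟩ | ⟨t, ht⟩))
    · exact .inl ⟨t, ht⟩
    · exact .inl ⟨t, ht⟩
    · exact .inr ⟨t, ht⟩
    · exact .inr ⟨finRotate k t, ht⟩
  · rintro (⟨t, ht⟩ | ⟨t, ht⟩)
    · exact .inl (.inl ⟨t, ht⟩)
    · exact .inr (.inl ⟨t, ht⟩)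

theorem covW_append_le (u v : List MonLetter) :
    covW (u ++ v) ≤ #(vertices u \ vertices v) + covW v := by
  rw [covW_eq_card_vertices, covW_eq_card_vertices, vertices_append, card_sdiff_add_card]

theorem exW_append (u v : List MonLetter) : exW (u ++ v) = exW u + exW v := by
  simp [exW, List.filter_append]

theorem exW_cycleWord (k : ℕ) (α i : Fin k → ℕ) :
    exW (cycleWord k α i) = #{t | α t ≠ i t} := by
  simp [exW, cycleWord, List.filter_append, List.ofFn_eq_map, List.filter_map,
    Function.comp_def, card_def, Finset.val_univ_fin, beq_eq_decide]

theorem DRegular.of_append_right {u v : List MonLetter} (h : DRegular (u ++ v)) :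
    DRegular v := by
  intro p hp hne
  have hlen : u.length + p < (u ++ v).length := by rw [List.length_append]; omega
  have hget : (u ++ v).get ⟨u.length + p, hlen⟩ = v.get p := by
    simp [List.getElem_append_right]
  have hdrop : (u ++ v).drop (u.length + p + 1) = v.drop (p + 1) := by
    rw [add_assoc, List.drop_length_add_append]
  simpa [hget, hdrop] using h ⟨u.length + p, hlen⟩ (hget ▸ hp) (hget ▸ hne)

theorem DRegular.mem_of_append_cons {u v : List MonLetter} {a b : ℕ}
    (h : DRegular (u ++ (false, a, b) :: v)) (hab : a ≠ b) : (true, a, b) ∈ v := by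
  have hlen : u.length < (u ++ (false, a, b) :: v).length := by simp
  have hget : (u ++ (false, a, b) :: v).get ⟨u.length, hlen⟩ = (false, a, b) := by simp
  have hdrop : (u ++ (false, a, b) :: v).drop (u.length + 1) = v := by simp
  have := h ⟨u.length, hlen⟩ (by rw [hget]) (by rw [hget]; exact hab)
  simp only [hget, hdrop] at this
  exact List.count_pos_iff.mp (by omega)

/-- All `∂`-letters of a cycle word come after its `x`-letters, so the later `x`-letter that
`∂`-regularity provides lies in the words glued after the cycle. -/
theorem DRegular.mem_of_cycleWord_append {k : ℕ} {α i : Fin k → ℕ} {v : List MonLetter}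
    (h : DRegular (cycleWord k α i ++ v)) (t : Fin k) (ht : α t ≠ i (finRotate k t)) :
    (true, α t, i (finRotate k t)) ∈ v := by
  have hmem : (false, α t, i (finRotate k t)) ∈
      List.ofFn fun t : Fin k => ((false, α t, i (finRotate k t)) : MonLetter) :=
    List.mem_ofFn.mpr ⟨t, rfl⟩
  obtain ⟨d₁, d₂, hd⟩ := List.append_of_mem hmem
  rw [cycleWord, hd, List.append_assoc, List.append_assoc, List.cons_append,
    ← List.append_assoc] at h
  rcases List.mem_append.mp (h.mem_of_append_cons ht) with hx | hx
  · have : (true, α t, i (finRotate k t)) ∈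
        List.ofFn fun t : Fin k => ((false, α t, i (finRotate k t)) : MonLetter) := by
      rw [hd]; exact List.mem_append_right _ (List.mem_cons_of_mem _ hx)
    simp at this
  · exact hx

theorem exists_nonloop_of_mem_sdiff {k : ℕ} {α i : Fin k → ℕ} {V : Finset ℕ}
    (hcov : 2 ≤ #(univ.image α ∪ univ.image i))
    (hV : ∀ t, α t ≠ i (finRotate k t) → α t ∈ V ∧ i (finRotate k t) ∈ V)
    {a : ℕ} (ha : a ∈ (univ.image α ∪ univ.image i) \ V) : ∃ t, i t = a ∧ α t ≠ i t := by
  obtain ⟨haα, haV⟩ := mem_sdiff.mp ha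
  by_contra! hloop
  have hα : ∀ t, α t = a → i (finRotate k t) = a := fun t hta => by
    by_contra hne
    exact haV (hta ▸ (hV t (hta ▸ Ne.symm hne)).1)
  have hi : ∀ t, i t = a → i (finRotate k t) = a := fun t hta =>
    hα t (hta ▸ hloop t hta)
  obtain ⟨t₀, ht₀⟩ : ∃ t₀, i t₀ = a := by
    simp only [mem_union, mem_image, mem_univ, true_and] at haα
    rcases haα with ⟨t, ht⟩ | ht
    · exact ⟨_, hα t ht⟩
    · exact ht
  have hi_const : ∀ t, i t = a := forall_of_finRotate_closed hi ht₀
  have hsub : univ.image α ∪ univ.image i ⊆ {a} := by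
    intro b hb
    simp only [mem_union, mem_image, mem_univ, true_and] at hb
    rcases hb with ⟨t, rfl⟩ | ⟨t, rfl⟩
    · simp [hloop t (hi_const t), hi_const t]
    · simp [hi_const t]
  have := card_le_card hsub
  rw [card_singleton] at this
  omega

theorem card_sdiff_le_card_nonloops {k : ℕ} (α i : Fin k → ℕ) (V : Finset ℕ)
    (hcov : 2 ≤ #(univ.image α ∪ univ.image i))
    (hV : ∀ t, α t ≠ i (finRotate k t) → α t ∈ V ∧ i (finRotate k t) ∈ V) :
    #((univ.image α ∪ univ.image i) \ V) ≤ #{t | α t ≠ i t} := by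
  refine card_le_card_of_surjOn i fun a ha => ?_
  obtain ⟨t, hta, ht⟩ := exists_nonloop_of_mem_sdiff hcov hV ha
  exact ⟨t, by simpa using ht, hta⟩

theorem covW_cycleWord_append_le {k : ℕ} {α i : Fin k → ℕ} {v : List MonLetter}
    (hcov : 2 ≤ covW (cycleWord k α i)) (hreg : DRegular (cycleWord k α i ++ v)) :
    covW (cycleWord k α i ++ v) ≤ exW (cycleWord k α i) + covW v := by
  have hV : ∀ t, α t ≠ i (finRotate k t) → α t ∈ vertices v ∧ i (finRotate k t) ∈ vertices v :=
    fun t ht => mem_vertices_of_mem (hreg.mem_of_cycleWord_append t ht)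
  rw [covW_eq_card_vertices, vertices_cycleWord] at hcov
  calc covW (cycleWord k α i ++ v)
      ≤ #(vertices (cycleWord k α i) \ vertices v) + covW v := covW_append_le _ _
    _ ≤ exW (cycleWord k α i) + covW v := by
      rw [vertices_cycleWord, exW_cycleWord]
      exact Nat.add_le_add_right (card_sdiff_le_card_nonloops α i _ hcov hV) _

theorem covW_flatten_le_exW (L : List (List MonLetter))
    (hL : ∀ c ∈ L, ∃ k, ∃ α i : Fin k → ℕ, c = cycleWord k α i ∧ 2 ≤ covW c)
    (hreg : DRegular L.flatten) : covW L.flatten ≤ exW L.flatten := by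
  induction L with
  | nil => simp [covW, exW]
  | cons c L ih =>
    obtain ⟨k, α, i, rfl, hcov⟩ := hL _ List.mem_cons_self
    rw [List.flatten_cons] at hreg ⊢
    have ih := ih (fun c hc => hL c (List.mem_cons_of_mem _ hc)) hreg.of_append_right
    rw [exW_append]
    exact (covW_cycleWord_append_le hcov hreg).trans (Nat.add_le_add_left ih _)

theorem statement17_general (n : ℕ) (k : Fin n → ℕ)
    (α i : (l : Fin n) → Fin (k l) → ℕ)
    (hcov : ∀ l, 2 ≤ covW (cycleWord (k l) (α l) (i l)))
    (w : List MonLetter)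
    (hw : w = (List.ofFn fun l => cycleWord (k l) (α l) (i l)).flatten)
    (hreg : DRegular w) :
    covW w ≤ exW w := by
  subst hw
  refine covW_flatten_le_exW _ (fun c hc => ?_) hreg
  obtain ⟨l, rfl⟩ := List.mem_ofFn.mp hc
  exact ⟨k l, α l, i l, rfl, hcov l⟩

/-- Graph-counting lemma: if the graph `G` (with its linear edge order) is obtained by
gluing cycles `C(1), …, C(n)` at vertices, each cycle having at least `2` distinct
vertices, and `G` is `∂`-regular, then the number of vertices of `G` is at most the
number of non-degenerate `x`-edges of `G`. -/
theorem statement17 (n : ℕ) (hn : 1 ≤ n) (k : Fin n → ℕ) (hk : ∀ l, 1 ≤ k l)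
    (α i : (l : Fin n) → Fin (k l) → ℕ)
    (hcov : ∀ l, 2 ≤ covW (cycleWord (k l) (α l) (i l)))
    (w : List MonLetter)
    (hw : w = (List.ofFn fun l => cycleWord (k l) (α l) (i l)).flatten)
    (hreg : DRegular w) :
    covW w ≤ exW w :=
  statement17_general n k α i hcov w hw hreg
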